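/- arXiv:2303.04919 — 4 statements merged into one kernel-verified Lean document; each statement's English description precedes it below -/
import Mathlib

section
/- Suppose a, c, q > 0, 0 < p < 1, Δ = A2^2 - 4*A1*A3 > 0 and 2*A1 + A2 > 0 with A1 = a*c^2*q + 1, A2 = -(2*a*c*q + a*c + p + 1), A3 = a + a*q + p. If 0 < c < 1, then the larger root x2 = (-A2 + √Δ)/(2*A1) satisfies 0 < x2 < 1 and y2 = 1 - c*x2 satisfies 0 < y2 < 1. -/
theorem larger_root_feasible_of_c_lt_one (a c q p A1 A2 A3 Δ : ℝ)
    (ha : 0 < a) (hc : 0 < c) (hq : 0 < q) (hp0 : 0 < p) (hp1 : p < 1)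
    (hA1 : A1 = a * c ^ 2 * q + 1)
    (hA2 : A2 = -(2 * a * c * q + a * c + p + 1))
    (hA3 : A3 = a + a * q + p)
    (hΔ : Δ = A2 ^ 2 - 4 * A1 * A3)
    (hΔpos : 0 < Δ) (hS : 0 < 2 * A1 + A2) (hc1 : c < 1) :
    (0 < (-A2 + Real.sqrt Δ) / (2 * A1) ∧ (-A2 + Real.sqrt Δ) / (2 * A1) < 1) ∧
      (0 < 1 - c * ((-A2 + Real.sqrt Δ) / (2 * A1)) ∧
        1 - c * ((-A2 + Real.sqrt Δ) / (2 * A1)) < 1) := by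
  have hA1pos : 0 < A1 := by nlinarith [mul_pos (mul_pos ha (pow_pos hc 2)) hq]
  have h2A1 : 0 < 2 * A1 := by linarith
  have hsq : Real.sqrt Δ ^ 2 = Δ := Real.sq_sqrt hΔpos.le
  have hsqnn : 0 ≤ Real.sqrt Δ := Real.sqrt_nonneg Δ
  have hA2neg : A2 < 0 := by nlinarith [mul_pos (mul_pos ha hc) hq, mul_pos ha hc]
  -- sum of coefficients positive
  have hsum : 0 < A1 + A2 + A3 := by
    nlinarith [mul_pos (mul_pos ha hq) (pow_pos (sub_pos.2 hc1) 2),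
      mul_pos ha (sub_pos.2 hc1)]
  have hx2lt : Real.sqrt Δ < 2 * A1 + A2 := by
    nlinarith [hsq, hsqnn, hS, hsum, hA1pos]
  have hac : a * c * (2 * q * (1 - c) + 1) < 1 - p := by nlinarith
  have h2A1c : 0 < 2 * A1 + c * A2 := by
    nlinarith [mul_pos (mul_pos ha hc) hq, mul_pos hc hp0, mul_le_of_le_one_right
      (le_of_lt (mul_pos (mul_pos ha hc) hq)) hc1.le]
  have hq2 : 0 < A1 + c * A2 + c ^ 2 * A3 := by
    nlinarith [mul_pos (sub_pos.2 hc1) (show (0:ℝ) < 1 - c * p by nlinarith)]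
  have hy : c * Real.sqrt Δ < 2 * A1 + c * A2 := by
    nlinarith [hsq, mul_nonneg hc.le hsqnn, hq2, h2A1c, hA1pos, sq_nonneg (c * Real.sqrt Δ)]
  have hx2pos : 0 < (-A2 + Real.sqrt Δ) / (2 * A1) :=
    div_pos (by linarith) h2A1
  have hx2lt1 : (-A2 + Real.sqrt Δ) / (2 * A1) < 1 := by
    rw [div_lt_one h2A1]; linarith
  refine ⟨⟨hx2pos, hx2lt1⟩, ?_, ?_⟩
  · have h : c * ((-A2 + Real.sqrt Δ) / (2 * A1)) < 1 := by
      rw [mul_div_assoc', div_lt_one h2A1]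
      have : c * (-A2 + Real.sqrt Δ) = -(c * A2) + c * Real.sqrt Δ := by ring
      linarith
    linarith
  · have := mul_pos hc hx2pos
    linarith
end

section
/- Suppose a, c > 0, 0 < p < 1, 0 < c < 1, and q > 0 is such that 2*A1 + A2 = 0, where A1 = a*c^2*q + 1 and A2 = -(2*a*c*q + a*c + p + 1); equivalently a = (p-1)/(c*(2*c*q - 2*q - 1)). Then the discriminant Δ = A2^2 - 4*A1*A3 with A3 = a + a*q + p equals -4*(-1+(c-1)q)*(-1+(-2+(p+1)c)q)*(c-1)*(p-1) / (c*(2*c*q - 2*q - 1)^2), and Δ < 0; in particular Δ > 0 and 2*A1 + A2 = 0 cannot hold simultaneously when 0 < c < 1. -/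
theorem discriminant_negative_when_two_A1_plus_A2_zero (a c q p A1 A2 A3 Δ : ℝ)
    (ha : 0 < a) (hc : 0 < c) (hq : 0 < q) (hp0 : 0 < p) (hp1 : p < 1) (hc1 : c < 1)
    (hA1 : A1 = a * c ^ 2 * q + 1)
    (hA2 : A2 = -(2 * a * c * q + a * c + p + 1))
    (hA3 : A3 = a + a * q + p)
    (hΔ : Δ = A2 ^ 2 - 4 * A1 * A3)
    (hzero : 2 * A1 + A2 = 0)
    (ha_eq : a = (p - 1) / (c * (2 * c * q - 2 * q - 1))) :
    Δ = -4 * (-1 + (c - 1) * q) * (-1 + (-2 + (p + 1) * c) * q) * (c - 1) * (p - 1) /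
        (c * (2 * c * q - 2 * q - 1) ^ 2) ∧
      Δ < 0 := by
  have hd : 2 * c * q - 2 * q - 1 < 0 := by nlinarith
  have hcd : c * (2 * c * q - 2 * q - 1) ≠ 0 :=
    ne_of_lt (mul_neg_of_pos_of_neg hc hd)
  have heq : Δ = -4 * (-1 + (c - 1) * q) * (-1 + (-2 + (p + 1) * c) * q) * (c - 1) * (p - 1) /
      (c * (2 * c * q - 2 * q - 1) ^ 2) := by
    have hcd2 : c * (2 * c * q - 2 * q - 1) ^ 2 ≠ 0 := by
      intro h; apply hcd
      rcases mul_eq_zero.1 h with h | h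
      · exact mul_eq_zero.2 (Or.inl h)
      · exact mul_eq_zero.2 (Or.inr (pow_eq_zero_iff (by norm_num) |>.1 h))
    have ha' : a * (c * (2 * c * q - 2 * q - 1)) = p - 1 := by rw [ha_eq]; exact div_mul_cancel₀ _ hcd
    rw [eq_div_iff hcd2, hΔ, hA1, hA2, hA3]
    clear ha hzero hΔ hA1 hA2 hA3 ha_eq
    linear_combination (c * (a * (c * (2 * c * q - 2 * q - 1)) + p - 1) + (2 * c * (2 * c * q - 2 * q - 1) * (2 * q + 1) * (p + 1) - 4 * c ^ 2 * (2 * c * q - 2 * q - 1) * q * p - 4 * (2 * c * q - 2 * q - 1) * (1 + q))) * ha'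
  refine ⟨heq, ?_⟩
  rw [heq]
  apply div_neg_of_neg_of_pos
  · have h1 : -1 + (c - 1) * q < 0 := by nlinarith
    have h2 : -1 + (-2 + (p + 1) * c) * q < 0 := by nlinarith
    nlinarith [mul_pos (mul_pos (neg_pos.2 h1) (neg_pos.2 h2)) (mul_pos (by linarith : (0:ℝ) < 1 - c) (by linarith : (0:ℝ) < 1 - p))]
  · exact mul_pos hc (pow_two_pos_of_ne_zero (ne_of_lt hd))
end

section
/- Let a, b, q > 0 and 0 < p < 1 with p ≠ 1 - a. At c = 1, for the system F(x,y) = x[(1-x)(x-p)/(1+qy) - ay], G(x,y) = by(1-y-cx), the eigenvector V = (a/(p-1), 1) of the Jacobian J(1,0) for eigenvalue 0 and the corresponding left eigenvector W = (0,1) satisfy: W·∂_c(F,G)(1,0) = 0, W·(D∂_c(F,G)(1,0) V) = -b ≠ 0, and W·(D^2(F,G)(1,0)(V,V)) = 2b(a+p-1)/(1-p) ≠ 0. -/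
theorem sotomayor_transcritical_conditions (a b p q : ℝ)
    (ha : 0 < a) (hb : 0 < b) (hq : 0 < q) (hp0 : 0 < p) (hp1 : p < 1)
    (hpa : p ≠ 1 - a)
    (F G : ℝ → ℝ → ℝ → ℝ)
    (hF : ∀ c x y, F c x y = x * ((1 - x) * (x - p) / (1 + q * y) - a * y))
    (hG : ∀ c x y, G c x y = b * y * (1 - y - c * x)) :
    -- W = (0,1), V = (a/(p-1), 1)
    -- W ⬝ Q_c(E₁; c = 1) = 0
    (deriv (fun c => F c 1 0) 1 = 0 ∧ deriv (fun c => G c 1 0) 1 = 0) ∧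
    -- W ⬝ (D Q_c(E₁; 1) V) = -b ≠ 0
    ((a / (p - 1)) * deriv (fun x => deriv (fun c => G c x 0) 1) 1 +
        1 * deriv (fun y => deriv (fun c => G c 1 y) 1) 0 = -b ∧ (-b : ℝ) ≠ 0) ∧
    -- W ⬝ (D² (F,G)(E₁; 1)(V,V)) = 2b(a+p-1)/(1-p) ≠ 0
    ((a / (p - 1)) ^ 2 * deriv (fun x => deriv (fun x' => G 1 x' 0) x) 1 +
        2 * (a / (p - 1)) * 1 * deriv (fun x => deriv (fun y => G 1 x y) 0) 1 +
        1 ^ 2 * deriv (fun y => deriv (fun y' => G 1 1 y') y) 0 =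
          2 * b * (a + p - 1) / (1 - p) ∧
      2 * b * (a + p - 1) / (1 - p) ≠ 0) := by
  have hpne : p - 1 ≠ 0 := sub_ne_zero.mpr hp1.ne
  have hpne' : (1 : ℝ) - p ≠ 0 := sub_ne_zero.mpr hp1.ne'
  -- F c 1 0 is constant in c
  have hF0 : deriv (fun c => F c 1 0) 1 = 0 := by
    have : (fun c : ℝ => F c 1 0) = fun _ => (0 : ℝ) := by
      funext c; rw [hF]; ring
    rw [this, deriv_const]
  -- G c x 0 = 0
  have hGc0 : ∀ x : ℝ, deriv (fun c => G c x 0) 1 = 0 := by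
    intro x
    have : (fun c : ℝ => G c x 0) = fun _ => (0 : ℝ) := by
      funext c; rw [hG]; ring
    rw [this, deriv_const]
  have h1 : deriv (fun x => deriv (fun c => G c x 0) 1) 1 = 0 := by
    have : (fun x : ℝ => deriv (fun c => G c x 0) 1) = fun _ => (0 : ℝ) := by
      funext x; exact hGc0 x
    rw [this, deriv_const]
  -- deriv in c of G c 1 y is -(b*y)
  have h2 : ∀ y : ℝ, deriv (fun c => G c 1 y) 1 = -(b * y) := by
    intro y
    have hd : HasDerivAt (fun c : ℝ => G c 1 y) (-(b * y)) 1 := by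
      have : HasDerivAt (fun c : ℝ => b * y * (1 - y - c * 1)) (b * y * (-(1 * 1))) 1 := by
        exact (((hasDerivAt_id (1 : ℝ)).mul_const 1).const_sub (1 - y)).const_mul (b * y)
      simp only [hG]
      simpa using this
    exact hd.deriv
  have h2' : deriv (fun y => deriv (fun c => G c 1 y) 1) 0 = -b := by
    have : (fun y : ℝ => deriv (fun c => G c 1 y) 1) = fun y => -(b * y) := by
      funext y; exact h2 y
    rw [this]
    have hd : HasDerivAt (fun y : ℝ => -(b * y)) (-b) 0 := by
      simpa using ((hasDerivAt_id (0 : ℝ)).const_mul b).fun_neg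
    exact hd.deriv
  -- G 1 x' 0 = 0
  have h3 : deriv (fun x => deriv (fun x' => G 1 x' 0) x) 1 = 0 := by
    have e : ∀ x : ℝ, deriv (fun x' => G 1 x' 0) x = 0 := by
      intro x
      have : (fun x' : ℝ => G 1 x' 0) = fun _ => (0 : ℝ) := by
        funext x'; rw [hG]; ring
      rw [this, deriv_const]
    have : (fun x : ℝ => deriv (fun x' => G 1 x' 0) x) = fun _ => (0 : ℝ) := by
      funext x; exact e x
    rw [this, deriv_const]
  -- deriv in y at 0 of G 1 x y is b*(1-x)
  have h4 : deriv (fun x => deriv (fun y => G 1 x y) 0) 1 = -b := by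
    have e : ∀ x : ℝ, deriv (fun y => G 1 x y) 0 = b * (1 - x) := by
      intro x
      have hd : HasDerivAt (fun y : ℝ => G 1 x y) (b * (1 - x)) 0 := by
        have heq : (fun y : ℝ => G 1 x y) = fun y : ℝ => b * (1 - x) * y - b * y ^ 2 := by
          funext y; rw [hG]; ring
        have h := ((hasDerivAt_id (0 : ℝ)).const_mul (b * (1 - x))).fun_sub
          ((hasDerivAt_pow 2 (0 : ℝ)).const_mul b)
        rw [heq]
        simpa using h
      exact hd.deriv
    have : (fun x : ℝ => deriv (fun y => G 1 x y) 0) = fun x => b * (1 - x) := by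
      funext x; exact e x
    rw [this]
    have hd : HasDerivAt (fun x : ℝ => b * (1 - x)) (-b) 1 := by
      simpa using ((hasDerivAt_id (1 : ℝ)).const_sub 1).const_mul b
    exact hd.deriv
  -- deriv in y' of G 1 1 y' is -2*b*y
  have h5 : deriv (fun y => deriv (fun y' => G 1 1 y') y) 0 = -(2 * b) := by
    have e : ∀ y : ℝ, deriv (fun y' => G 1 1 y') y = -(b * (2 * y)) := by
      intro y
      have hd : HasDerivAt (fun y' : ℝ => G 1 1 y') (-(b * (2 * y))) y := by
        have h : HasDerivAt (fun y' : ℝ => -(b * y' ^ 2)) (-(b * (2 * y ^ 1))) y :=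
          (((hasDerivAt_pow 2 y).const_mul b)).neg
        have heq : (fun y' : ℝ => G 1 1 y') = fun y' : ℝ => -(b * y' ^ 2) := by
          funext y'; rw [hG]; ring
        rw [heq]
        simpa using h
      exact hd.deriv
    have : (fun y : ℝ => deriv (fun y' => G 1 1 y') y) = fun y => -(b * (2 * y)) := by
      funext y; exact e y
    rw [this]
    have hd : HasDerivAt (fun y : ℝ => -(b * (2 * y))) (-(2 * b)) 0 := by
      have := (((hasDerivAt_id (0 : ℝ)).const_mul 2).const_mul b).fun_neg
      simpa [mul_comm] using this
    exact hd.deriv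
  refine ⟨⟨hF0, hGc0 1⟩, ⟨?_, neg_ne_zero.mpr hb.ne'⟩, ⟨?_, ?_⟩⟩
  · rw [h1, h2']; ring
  · rw [h3, h4, h5]
    field_simp
    ring
  · have hnum : a + p - 1 ≠ 0 := by
      intro h; apply hpa; linarith
    exact div_ne_zero (mul_ne_zero (mul_ne_zero two_ne_zero hb.ne') hnum) hpne'
end

section
/- Let a, b, c, q > 0, 0 < p < 1, and let (u*, v*) be an interior equilibrium of the system u_t = d1 Δu + u[(1-u)(u-p)/(1+qv) - av], v_t = d2 Δv + bv(1-v-cu) whose kinetic Jacobian J = [[B1,B2],[B3,B4]] satisfies det(J) > 0 and tr(J) < 0 (linearly stable for the kinetics). Since B2 < 0, B3 < 0, B4 < 0 and det(J) > 0 force B1 < 0, we have B1·B4 > 0; therefore the Turing instability condition d2·B1 + d1·B4 > 0 fails for all diffusion coefficients d1, d2 > 0, i.e., no diffusion-driven instability occurs. -/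
theorem no_turing_instability (a b c p q u v B1 B2 B3 B4 : ℝ)
    (ha : 0 < a) (hb : 0 < b) (hc : 0 < c) (hq : 0 < q)
    (hp0 : 0 < p) (hp1 : p < 1)
    (hu0 : p < u) (hu1 : u < 1) (hv0 : 0 < v) (hv1 : v < 1)
    (hB1 : B1 = u * (-2 * u + p + 1) / (q * v + 1))
    (hB2 : B2 = u * (-((1 - u) * (u - p)) * q / (1 + q * v) ^ 2 - a))
    (hB3 : B3 = -b * c * v)
    (hB4 : B4 = -b * v)
    (hdet : 0 < B1 * B4 - B2 * B3)
    (htr : B1 + B4 < 0) :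
    B1 < 0 ∧ 0 < B1 * B4 ∧
      ∀ d1 d2 : ℝ, 0 < d1 → 0 < d2 → ¬ (0 < d2 * B1 + d1 * B4) := by
  have hu : 0 < u := hp0.trans hu0
  have hB4n : B4 < 0 := by rw [hB4]; nlinarith
  have hB3n : B3 < 0 := by rw [hB3]; nlinarith
  have hB2n : B2 < 0 := by
    rw [hB2]
    have h1 : 0 < (1 - u) * (u - p) := by nlinarith
    have h2 : 0 < (1 + q * v) ^ 2 := by positivity
    have : -((1 - u) * (u - p)) * q / (1 + q * v) ^ 2 < 0 := by
      apply div_neg_of_neg_of_pos _ h2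
      nlinarith
    nlinarith
  have hprod : 0 < B1 * B4 := by nlinarith
  have hB1n : B1 < 0 := by nlinarith
  refine ⟨hB1n, hprod, fun d1 d2 hd1 hd2 h => ?_⟩
  nlinarith
end
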